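/- Let t > 0 and let W be a random continuous function on [0, t] (a stochastic process on a probability space with almost surely continuous sample paths). Suppose there exist constants α, β > 0 such that for all m > 0 and all 0 ≤ s ≤ s + r ≤ t, one has P(|W(s) − W(s + r)| > m·√r) ≤ α·exp(−β·m²). Then for every m ≥ 20/√β, P( sup_{0 ≤ s ≤ s + r ≤ t} |W(s) − W(s + r)| ≥ m·√t ) ≤ 2α·exp(−β·m²/64). -/

import Mathlib

/-!
Chaining along dyadic grids. Call an outcome bad if `|W 0 - W t| > m √t / 8`, or if for some `n`
an increment of `W` over one of the `2 ^ (n + 1)` dyadic intervals of length `t / 2 ^ (n + 1)`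
exceeds `(m / 7) (3 / 4) ^ (n + 1) √t`. Off the bad event, for every `u` the dyadic
approximations of `u` from below telescope, by continuity of the path, to within
`∑ (m / 7) (3 / 4) ^ (n + 1) √t = 3 m √t / 7` of the coarsest one, which is `0` or `t`; hence
every increment is at most `(1 / 8 + 6 / 7) m √t < m √t`. The threshold at level `n + 1` is
`μ √(t / 2 ^ (n + 1))` with `μ² = (m² / 49) (9 / 8) ^ (n + 1)`, so the union bound over the
levels is a series `∑ 2 ^ (n + 1) α exp (-β μ²)` that, once `β m² ≥ 400`, is dominated by a
geometric series of total mass `α exp (-β m² / 64)`, the bound for the level-`0` event.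
-/

open MeasureTheory Filter Set Topology

namespace Chaining

noncomputable def dyadicFloor (t : ℝ) (n : ℕ) (u : ℝ) : ℝ := ⌊u / (t / 2 ^ n)⌋₊ * (t / 2 ^ n)

variable {t u : ℝ}

lemma dyadicFloor_nonneg (ht : 0 ≤ t) (n : ℕ) : 0 ≤ dyadicFloor t n u := by
  unfold dyadicFloor; positivity

lemma dyadicFloor_le (ht : 0 < t) (hu : 0 ≤ u) (n : ℕ) : dyadicFloor t n u ≤ u :=
  (le_div_iff₀ (by positivity)).1 (Nat.floor_le (by positivity))

lemma lt_dyadicFloor_add (ht : 0 < t) (n : ℕ) : u < dyadicFloor t n u + t / 2 ^ n := by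
  have := (div_lt_iff₀ (by positivity : 0 < t / 2 ^ n)).1 (Nat.lt_floor_add_one (u / (t / 2 ^ n)))
  rwa [add_one_mul] at this

lemma tendsto_dyadicFloor (ht : 0 < t) (hu : 0 ≤ u) :
    Tendsto (fun n => dyadicFloor t n u) atTop (𝓝 u) := by
  have hδ : Tendsto (fun n : ℕ => t / 2 ^ n) atTop (𝓝 0) :=
    tendsto_const_nhds.div_atTop (tendsto_pow_atTop_atTop_of_one_lt one_lt_two)
  refine tendsto_of_tendsto_of_tendsto_of_le_of_le (by simpa using tendsto_const_nhds.sub hδ)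
    tendsto_const_nhds (fun n => ?_) (dyadicFloor_le ht hu)
  linarith [lt_dyadicFloor_add (u := u) ht n]

lemma dyadicFloor_zero_eq_zero_or_eq (ht : 0 < t) (hu : u ∈ Icc 0 t) :
    dyadicFloor t 0 u = 0 ∨ dyadicFloor t 0 u = t := by
  rcases hu.2.lt_or_eq with hlt | rfl
  · left
    simp [dyadicFloor, Nat.floor_eq_zero.2 ((div_lt_one ht).2 hlt)]
  · right
    simp [dyadicFloor, ht.ne']

lemma dyadicFloor_succ_eq_or (t u : ℝ) (n : ℕ) :
    dyadicFloor t (n + 1) u = dyadicFloor t n u ∨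
      ∃ k : ℕ, dyadicFloor t n u = k * (t / 2 ^ (n + 1)) ∧
        dyadicFloor t (n + 1) u = k * (t / 2 ^ (n + 1)) + t / 2 ^ (n + 1) := by
  set j := ⌊u / (t / 2 ^ (n + 1))⌋₊
  have hfloor : ⌊u / (t / 2 ^ n)⌋₊ = j / 2 := by
    rw [← Nat.floor_div_ofNat]
    congr 1
    rw [pow_succ]
    field_simp
  have hsucc : dyadicFloor t (n + 1) u = j * (t / 2 ^ (n + 1)) := rfl
  have hn : dyadicFloor t n u = (j / 2 : ℕ) * (t / 2 ^ n) := by rw [dyadicFloor, hfloor]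
  obtain ⟨q, hq | hq⟩ : ∃ q, j = 2 * q ∨ j = 2 * q + 1 := ⟨j / 2, by omega⟩
  · left
    rw [hsucc, hn, hq, Nat.mul_div_cancel_left _ two_pos, pow_succ]
    push_cast; ring
  · refine .inr ⟨2 * q, ?_, ?_⟩
    · rw [hn, hq, Nat.mul_add_div two_pos, pow_succ]
      push_cast; ring
    · rw [hsucc, hq]
      push_cast; ring

noncomputable def dyadicIncrement (f : ℝ → ℝ) (t : ℝ) (n k : ℕ) : ℝ :=
  |f (k * (t / 2 ^ n)) - f (k * (t / 2 ^ n) + t / 2 ^ n)|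

variable {f : ℝ → ℝ} {y : ℕ → ℝ}

lemma abs_dyadicFloor_sub_dyadicFloor_succ_le (ht : 0 < t) (hu : u ∈ Icc 0 t)
    (hgrid : ∀ n, ∀ k < 2 ^ (n + 1), dyadicIncrement f t (n + 1) k ≤ y n)
    (n : ℕ) : |f (dyadicFloor t n u) - f (dyadicFloor t (n + 1) u)| ≤ y n := by
  rcases dyadicFloor_succ_eq_or t u n with h | ⟨k, hk, hk'⟩
  · rw [h, sub_self, abs_zero]
    exact (abs_nonneg _).trans (hgrid n 0 (by positivity))
  · rw [hk, hk']
    refine hgrid n k ?_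
    have hδ : 0 < t / 2 ^ (n + 1) := by positivity
    have hle : ((k : ℝ) + 1) * (t / 2 ^ (n + 1)) ≤ 2 ^ (n + 1) * (t / 2 ^ (n + 1)) := by
      rw [mul_div_cancel₀ _ (by positivity)]
      linarith [dyadicFloor_le ht hu.1 (n + 1), hu.2]
    exact_mod_cast (lt_add_one (k : ℝ)).trans_le (le_of_mul_le_mul_right hle hδ)

lemma abs_dyadicFloor_zero_sub_le (ht : 0 < t) (hf : ContinuousOn f (Icc 0 t)) (hy : Summable y)
    (hgrid : ∀ n, ∀ k < 2 ^ (n + 1), dyadicIncrement f t (n + 1) k ≤ y n)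
    (hu : u ∈ Icc 0 t) : |f (dyadicFloor t 0 u) - f u| ≤ ∑' n, y n := by
  have hmem : ∀ n, dyadicFloor t n u ∈ Icc 0 t := fun n =>
    ⟨dyadicFloor_nonneg ht.le n, (dyadicFloor_le ht hu.1 n).trans hu.2⟩
  have hlim : Tendsto (fun n => f (dyadicFloor t n u)) atTop (𝓝 (f u)) :=
    (hf u hu).tendsto.comp
      (tendsto_nhdsWithin_iff.2 ⟨tendsto_dyadicFloor ht hu.1, .of_forall hmem⟩)
  simpa only [Real.dist_eq] using dist_le_tsum_of_dist_le_of_tendsto₀ y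
    (abs_dyadicFloor_sub_dyadicFloor_succ_le ht hu hgrid) hy hlim

noncomputable def maxIncrement (f : ℝ → ℝ) (t : ℝ) : ℝ :=
  ⨆ p : {q : ℝ × ℝ // 0 ≤ q.1 ∧ 0 ≤ q.2 ∧ q.1 + q.2 ≤ t}, |f p.1.1 - f (p.1.1 + p.1.2)|

lemma maxIncrement_le (ht : 0 < t) (hf : ContinuousOn f (Icc 0 t)) (hy : Summable y) {x₀ : ℝ}
    (h₀ : |f 0 - f t| ≤ x₀)
    (hgrid : ∀ n, ∀ k < 2 ^ (n + 1), dyadicIncrement f t (n + 1) k ≤ y n) :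
    maxIncrement f t ≤ x₀ + 2 * ∑' n, y n := by
  have : Nonempty {q : ℝ × ℝ // 0 ≤ q.1 ∧ 0 ≤ q.2 ∧ q.1 + q.2 ≤ t} :=
    ⟨⟨(0, 0), le_rfl, le_rfl, by simpa using ht.le⟩⟩
  refine ciSup_le fun ⟨(s, r), hs, hr, hsr⟩ => ?_
  have hu : s ∈ Icc 0 t := ⟨hs, by linarith⟩
  have hv : s + r ∈ Icc 0 t := ⟨by linarith, hsr⟩
  have hmid : |f (dyadicFloor t 0 s) - f (dyadicFloor t 0 (s + r))| ≤ x₀ := by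
    rcases dyadicFloor_zero_eq_zero_or_eq ht hu with h | h <;>
      rcases dyadicFloor_zero_eq_zero_or_eq ht hv with h' | h' <;>
      simp only [h, h', sub_self, abs_zero, abs_sub_comm (f t)] <;>
      linarith [abs_nonneg (f 0 - f t)]
  set p := dyadicFloor t 0 s
  set p' := dyadicFloor t 0 (s + r)
  calc |f s - f (s + r)| ≤ |f s - f p| + |f p - f p'| + |f p' - f (s + r)| :=
        by linarith [abs_sub_le (f s) (f p) (f p'), abs_sub_le (f s) (f p') (f (s + r))]
    _ ≤ ∑' n, y n + x₀ + ∑' n, y n := by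
        refine add_le_add_three ?_ hmid (abs_dyadicFloor_zero_sub_le ht hf hy hgrid hv)
        rw [abs_sub_comm]
        exact abs_dyadicFloor_zero_sub_le ht hf hy hgrid hu
    _ = x₀ + 2 * ∑' n, y n := by ring

lemma exp_neg_two_le : Real.exp (-2) ≤ 6⁻¹ := by
  rw [Real.exp_neg]
  refine inv_anti₀ (by norm_num) ?_
  have := Real.exp_one_gt_d9
  rw [show (2 : ℝ) = 1 + 1 by norm_num, Real.exp_add]
  nlinarith

lemma exp_neg_eight_sevenths_le : Real.exp (-(8 / 7)) ≤ 3⁻¹ := by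
  rw [Real.exp_neg]
  refine inv_anti₀ (by norm_num) ?_
  have := Real.exp_one_gt_d9
  have := Real.add_one_le_exp (1 / 7)
  rw [show (8 / 7 : ℝ) = 1 + 1 / 7 by norm_num, Real.exp_add]
  nlinarith

lemma two_pow_succ_mul_exp_le {A : ℝ} (hA : 25 / 4 ≤ A) (n : ℕ) :
    2 ^ (n + 1) * Real.exp (-(64 / 49 * A * (9 / 8) ^ (n + 1))) ≤
      Real.exp (-A) * ((2 / 3) ^ n / 3) := by
  have hbern : 1 + n * (1 / 8) ≤ (1 + 1 / 8 : ℝ) ^ n := one_add_mul_le_pow (by norm_num) n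
  have hexp : A + 2 + n * (8 / 7) ≤ 64 / 49 * A * (9 / 8) ^ (n + 1) := by
    have hn : (0 : ℝ) ≤ n := n.cast_nonneg
    rw [pow_succ]
    nlinarith [mul_le_mul_of_nonneg_left hbern (by linarith : (0 : ℝ) ≤ A)]
  calc 2 ^ (n + 1) * Real.exp (-(64 / 49 * A * (9 / 8) ^ (n + 1)))
      ≤ 2 ^ (n + 1) * Real.exp (-(A + 2 + n * (8 / 7))) := by gcongr
    _ = Real.exp (-A) * (2 * Real.exp (-2)) * (2 * Real.exp (-(8 / 7))) ^ n := by
        rw [show -(A + 2 + n * (8 / 7)) = -A + -2 + n * -(8 / 7) by ring, Real.exp_add,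
          Real.exp_add, Real.exp_nat_mul]
        ring
    _ ≤ Real.exp (-A) * (2 * 6⁻¹) * (2 * 3⁻¹) ^ n := by
        gcongr
        exacts [exp_neg_two_le, exp_neg_eight_sevenths_le]
    _ = Real.exp (-A) * ((2 / 3) ^ n / 3) := by ring

lemma tsum_two_pow_succ_mul_exp_le {A : ℝ} (hA : 25 / 4 ≤ A) :
    ∑' n : ℕ, (2 : ENNReal) ^ (n + 1) *
        ENNReal.ofReal (Real.exp (-(64 / 49 * A * (9 / 8) ^ (n + 1)))) ≤
      ENNReal.ofReal (Real.exp (-A)) := by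
  have hsum : Summable fun n : ℕ => Real.exp (-A) * ((2 / 3 : ℝ) ^ n / 3) :=
    ((summable_geometric_of_lt_one (by norm_num) (by norm_num)).div_const _).mul_left _
  calc _ ≤ ∑' n : ℕ, ENNReal.ofReal (Real.exp (-A) * ((2 / 3) ^ n / 3)) := by
        refine ENNReal.tsum_le_tsum fun n => ?_
        rw [← ENNReal.ofReal_ofNat 2, ← ENNReal.ofReal_pow zero_le_two,
          ← ENNReal.ofReal_mul (by positivity)]
        exact ENNReal.ofReal_le_ofReal (two_pow_succ_mul_exp_le hA n)
    _ = ENNReal.ofReal (Real.exp (-A)) := by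
        rw [← ENNReal.ofReal_tsum_of_nonneg (fun n => by positivity) hsum, tsum_mul_left,
          tsum_div_const, tsum_geometric_of_lt_one (by norm_num) (by norm_num)]
        norm_num

lemma sqrt_nine_eighths_pow_mul_sqrt (t : ℝ) (j : ℕ) :
    √((9 / 8) ^ j) * √(t / 2 ^ j) = (3 / 4) ^ j * √t := by
  rw [← Real.sqrt_mul (by positivity),
    show (9 / 8 : ℝ) ^ j * (t / 2 ^ j) = ((3 / 4) ^ j) ^ 2 * t by
      rw [← pow_mul, pow_mul']; field_simp; rw [mul_assoc, ← mul_pow]; norm_num [mul_comm],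
    Real.sqrt_mul (by positivity), Real.sqrt_sq (by positivity)]

noncomputable def levelThreshold (m t : ℝ) (n : ℕ) : ℝ :=
  m / 7 * √((9 / 8) ^ (n + 1)) * √(t / 2 ^ (n + 1))

lemma hasSum_levelThreshold (m t : ℝ) : HasSum (levelThreshold m t) (3 / 7 * (m * √t)) := by
  have hgeom := (hasSum_geometric_of_lt_one (r := (3 / 4 : ℝ)) (by norm_num)
    (by norm_num)).mul_left (3 / 4 * (m / 7 * √t))
  have hfun : levelThreshold m t = fun n => 3 / 4 * (m / 7 * √t) * (3 / 4) ^ n := by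
    ext n
    rw [levelThreshold, mul_assoc, sqrt_nine_eighths_pow_mul_sqrt]
    ring
  rwa [hfun, show 3 / 7 * (m * √t) = 3 / 4 * (m / 7 * √t) * (1 - 3 / 4)⁻¹ by ring]

variable {Ω : Type*} [MeasurableSpace Ω] {P : Measure Ω} {W : ℝ → Ω → ℝ}

def HasGaussianIncrementTail (P : Measure Ω) (W : ℝ → Ω → ℝ) (t α β : ℝ) : Prop :=
  ∀ m : ℝ, 0 < m → ∀ s r : ℝ, 0 ≤ s → 0 ≤ r → s + r ≤ t →
    P {ω | m * √r < |W s ω - W (s + r) ω|} ≤ ENNReal.ofReal (α * Real.exp (-β * m ^ 2))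

lemma measure_lt_maxIncrement_le (ht : 0 < t)
    (hcont : ∀ᵐ ω ∂P, ContinuousOn (fun s => W s ω) (Icc 0 t)) (hy : Summable y) (x₀ : ℝ) :
    P {ω | x₀ + 2 * ∑' n, y n < maxIncrement (W · ω) t} ≤
      P {ω | x₀ < |W 0 ω - W t ω|} + ∑' n, ∑ k ∈ Finset.range (2 ^ (n + 1)),
        P {ω | y n < dyadicIncrement (W · ω) t (n + 1) k} := by
  calc _ ≤ P ({ω | x₀ < |W 0 ω - W t ω|} ∪ ⋃ n, ⋃ k ∈ Finset.range (2 ^ (n + 1)),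
        {ω | y n < dyadicIncrement (W · ω) t (n + 1) k}) := by
        refine measure_mono_ae ?_
        filter_upwards [hcont] with ω hω hbig
        change ω ∈ (_ ∪ _ : Set Ω)
        simp only [mem_union, mem_iUnion, mem_ofPred_eq, Finset.mem_range, exists_prop]
        by_contra! hgood
        exact (maxIncrement_le ht hω hy hgood.1 hgood.2).not_gt hbig
    _ ≤ _ := by
        refine (measure_union_le _ _).trans (add_le_add le_rfl ?_)
        exact (measure_iUnion_le _).trans
          (ENNReal.tsum_le_tsum fun n => measure_biUnion_finset_le _ _)

lemma sum_measure_dyadic_increment_le {α β : ℝ} (ht : 0 ≤ t)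
    (hinc : HasGaussianIncrementTail P W t α β)
    {μ : ℝ} (hμ : 0 < μ) (n : ℕ) :
    ∑ k ∈ Finset.range (2 ^ n),
        P {ω | μ * √(t / 2 ^ n) < dyadicIncrement (W · ω) t n k} ≤
      2 ^ n * ENNReal.ofReal (α * Real.exp (-β * μ ^ 2)) := by
  calc _ ≤ ∑ k ∈ Finset.range (2 ^ n), ENNReal.ofReal (α * Real.exp (-β * μ ^ 2)) := by
        refine Finset.sum_le_sum fun k hk =>
          hinc μ hμ (k * (t / 2 ^ n)) (t / 2 ^ n) (by positivity) (by positivity) ?_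
        have hk : (k : ℝ) + 1 ≤ 2 ^ n := by exact_mod_cast Finset.mem_range.1 hk
        calc k * (t / 2 ^ n) + t / 2 ^ n = (k + 1) * (t / 2 ^ n) := by ring
          _ ≤ 2 ^ n * (t / 2 ^ n) := by gcongr
          _ = t := mul_div_cancel₀ _ (by positivity)
    _ = _ := by simp

lemma tsum_sum_measure_dyadic_increment_le {α β m : ℝ} (ht : 0 ≤ t)
    (hinc : HasGaussianIncrementTail P W t α β)
    (hm : 0 < m) (hA : 25 / 4 ≤ β * m ^ 2 / 64) :
    ∑' n, ∑ k ∈ Finset.range (2 ^ (n + 1)),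
        P {ω | levelThreshold m t n < dyadicIncrement (W · ω) t (n + 1) k} ≤
      ENNReal.ofReal α * ENNReal.ofReal (Real.exp (-β * m ^ 2 / 64)) := by
  calc _ ≤ ∑' n : ℕ, 2 ^ (n + 1) *
        ENNReal.ofReal (α * Real.exp (-β * (m / 7 * √((9 / 8) ^ (n + 1))) ^ 2)) :=
        ENNReal.tsum_le_tsum fun n => sum_measure_dyadic_increment_le ht hinc (by positivity) _
    _ = ENNReal.ofReal α * ∑' n : ℕ, 2 ^ (n + 1) *
        ENNReal.ofReal (Real.exp (-(64 / 49 * (β * m ^ 2 / 64) * (9 / 8) ^ (n + 1)))) := by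
        rw [← ENNReal.tsum_mul_left]
        congr! 2 with n
        rw [ENNReal.ofReal_mul' (Real.exp_pos _).le, mul_pow, Real.sq_sqrt (by positivity)]
        ring_nf
    _ ≤ _ := by
        rw [neg_mul, neg_div]
        gcongr
        exact tsum_two_pow_succ_mul_exp_le hA

end Chaining

open Chaining

theorem chaining_modulus_of_continuity
    {Ω : Type*} [MeasurableSpace Ω] (P : Measure Ω)
    (t : ℝ) (ht : 0 < t) (W : ℝ → Ω → ℝ)
    (hcont : ∀ᵐ ω ∂P, ContinuousOn (fun s => W s ω) (Set.Icc 0 t))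
    (α β : ℝ) (hβ : 0 < β)
    (hinc : ∀ m : ℝ, 0 < m → ∀ s r : ℝ, 0 ≤ s → 0 ≤ r → s + r ≤ t →
      P {ω | m * Real.sqrt r < |W s ω - W (s + r) ω|} ≤
        ENNReal.ofReal (α * Real.exp (-β * m ^ 2)))
    (m : ℝ) (hm : 20 / Real.sqrt β ≤ m) :
    P {ω | m * Real.sqrt t ≤
        ⨆ p : {q : ℝ × ℝ // 0 ≤ q.1 ∧ 0 ≤ q.2 ∧ q.1 + q.2 ≤ t},
          |W p.1.1 ω - W (p.1.1 + p.1.2) ω|} ≤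
      ENNReal.ofReal (2 * α * Real.exp (-β * m ^ 2 / 64)) := by
  have hm₀ : 0 < m := (by positivity : 0 < 20 / √β).trans_le hm
  have hA : 25 / 4 ≤ β * m ^ 2 / 64 := by
    have : 20 ≤ m * √β := (div_le_iff₀ (by positivity)).1 hm
    nlinarith [Real.sq_sqrt hβ.le]
  have hy := hasSum_levelThreshold m t
  have hlevel₀ : P {ω | m / 8 * √t < |W 0 ω - W t ω|} ≤
      ENNReal.ofReal (α * Real.exp (-β * m ^ 2 / 64)) := by
    have := hinc (m / 8) (by positivity) 0 t le_rfl ht.le (by simp)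
    rwa [zero_add, show -β * (m / 8) ^ 2 = -β * m ^ 2 / 64 by ring] at this
  calc _ ≤ P {ω | m / 8 * √t + 2 * ∑' n, levelThreshold m t n < maxIncrement (W · ω) t} := by
        refine measure_mono (ofPred_subset_ofPred.2 fun ω hω => lt_of_lt_of_le ?_ hω)
        rw [hy.tsum_eq]
        nlinarith [Real.sqrt_pos.2 ht]
    _ ≤ _ := measure_lt_maxIncrement_le ht hcont hy.summable _
    _ ≤ _ := add_le_add hlevel₀ (tsum_sum_measure_dyadic_increment_le ht.le hinc hm₀ hA)
    _ = _ := by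
        rw [ENNReal.ofReal_mul' (Real.exp_pos _).le, ENNReal.ofReal_mul' (Real.exp_pos _).le,
          ENNReal.ofReal_mul zero_le_two, ENNReal.ofReal_ofNat]
        ring
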